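/- arXiv:1505.04224 — 6 statements merged into one kernel-verified Lean document; each statement's English description precedes it below -/
import Mathlib

section
/- Every pseudosphere is shellable: for every nonempty finite index set P' and every family (S_i)_{i ∈ P'} of nonempty finite sets, the pseudosphere Ψ(P', S) is a pure simplicial complex of dimension |P'| − 1 whose facets admit a shelling order. -/
/-- `K` is an abstract simplicial complex: a finite family of finite sets closed
under taking subsets. -/
def IsComplex {α : Type*} [DecidableEq α] (K : Finset (Finset α)) : Prop :=
  ∀ σ ∈ K, ∀ τ ⊆ σ, τ ∈ K

/-- `σ` is a facet of `K`: a simplex of `K` that is maximal under inclusion. -/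
def IsFacet {α : Type*} (K : Finset (Finset α)) (σ : Finset α) : Prop :=
  σ ∈ K ∧ ∀ τ ∈ K, σ ⊆ τ → σ = τ

/-- Given a linear ordering `φ 0, …, φ t` of facets, the family of all subsets of
`φ j` that are contained in some earlier facet `φ i`, `i < j`. -/
def ShellingComplex {α : Type*} [DecidableEq α] {t : ℕ} (φ : Fin (t + 1) → Finset α)
    (j : Fin (t + 1)) : Finset (Finset α) :=
  (φ j).powerset.filter (fun μ => ∃ i, i < j ∧ μ ⊆ φ i)

/-- `φ 0, …, φ t` is a shelling order of `K`: it enumerates the facets of `K` without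
repetition, and for every `0 < j` the family of all subsets of `φ j` contained in some
earlier facet is a pure simplicial complex of dimension `dim (φ j) - 1`. -/
def IsShellingOrder {α : Type*} [DecidableEq α] (K : Finset (Finset α)) {t : ℕ}
    (φ : Fin (t + 1) → Finset α) : Prop :=
  Function.Injective φ ∧ (∀ σ, IsFacet K σ ↔ ∃ i, φ i = σ) ∧
  ∀ j : Fin (t + 1), 0 < j →
    (∃ τ ∈ ShellingComplex φ j, τ.card = (φ j).card - 1) ∧
    (∀ τ, IsFacet (ShellingComplex φ j) τ → τ.card = (φ j).card - 1)

/-- A pure simplicial complex is shellable if its facets admit a shelling order. -/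
def IsShellable {α : Type*} [DecidableEq α] (K : Finset (Finset α)) : Prop :=
  ∃ (t : ℕ) (φ : Fin (t + 1) → Finset α), IsShellingOrder K φ

/-- The pseudosphere `Ψ(P', S)`: simplexes are the sets `{(i, v i) : i ∈ Q}` for
`Q ⊆ P'`, with one chosen value `v i ∈ S i` for each `i ∈ Q`. -/
def Pseudosphere {P V : Type*} [DecidableEq P] [DecidableEq V]
    (P' : Finset P) (S : P → Finset V) : Finset (Finset (P × V)) :=
  (P'.biUnion (fun i => (S i).image (fun v => (i, v)))).powerset.filter
    (fun σ => ∀ x ∈ σ, ∀ y ∈ σ, x.1 = y.1 → x = y)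

/-!
The facets of `Ψ(P', S)` are the graphs `{(i, f i)}` of the choice functions `f ∈ ∏ S i`.
Index `P'` by `Fin |P'|`, well-order the values, and list the facets in lexicographic order of
their choice functions. A face of the facet of `f` lies in an earlier facet iff it misses a
vertex `(i, f i)` whose value `f i` is not minimal in `S i`: lowering `f` at such an `i` gives an
earlier facet containing the face, and conversely the first coordinate at which an earlier
choice function differs from `f` is such a vertex. Hence the part of a later facet `φ` shared
with its predecessors is generated by the faces `φ \ {x}` with `x` in this nonempty
"restriction set", so it is pure of codimension one.
-/

open Finset

section Shelling

variable {α : Type*} [DecidableEq α] {t : ℕ} {φ : Fin (t + 1) → Finset α}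

theorem mem_shellingComplex_iff {j : Fin (t + 1)} {τ : Finset α} :
    τ ∈ ShellingComplex φ j ↔ τ ⊆ φ j ∧ ∃ i < j, τ ⊆ φ i := by
  simp [ShellingComplex]

theorem shellingComplex_pure_of_restriction (R : Fin (t + 1) → Finset α)
    (hR : ∀ j, R j ⊆ φ j)
    (hrestr : ∀ j, ∀ τ ⊆ φ j, (∃ i < j, τ ⊆ φ i) ↔ ¬ R j ⊆ τ) {j : Fin (t + 1)} (hj : 0 < j) :
    (∃ τ ∈ ShellingComplex φ j, τ.card = (φ j).card - 1) ∧
      ∀ τ, IsFacet (ShellingComplex φ j) τ → τ.card = (φ j).card - 1 := by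
  have hmem : ∀ τ, τ ∈ ShellingComplex φ j ↔ τ ⊆ φ j ∧ ¬ R j ⊆ τ := fun τ => by
    rw [mem_shellingComplex_iff]
    exact and_congr_right (hrestr j τ)
  have herase : ∀ x ∈ R j, (φ j).erase x ∈ ShellingComplex φ j ∧
      ((φ j).erase x).card = (φ j).card - 1 := fun x hx =>
    ⟨(hmem _).2 ⟨erase_subset _ _, fun h => notMem_erase x _ (h hx)⟩,
      card_erase_of_mem (hR j hx)⟩
  obtain ⟨x, hx⟩ : (R j).Nonempty := nonempty_iff_ne_empty.2 fun h =>
    (hrestr j ∅ (empty_subset _)).1 ⟨0, hj, empty_subset _⟩ h.subset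
  refine ⟨⟨_, herase x hx⟩, fun τ ⟨hτ, hmax⟩ => ?_⟩
  obtain ⟨hτφ, hRτ⟩ := (hmem τ).1 hτ
  obtain ⟨y, hy, hyτ⟩ := not_subset.1 hRτ
  rw [hmax _ (herase y hy).1 (subset_erase.2 ⟨hτφ, hyτ⟩), (herase y hy).2]

theorem exists_lt_orderEmbOfFin_iff {β : Type*} [LinearOrder β] {s : Finset β} {k : ℕ}
    (h : s.card = k) (j : Fin k) (p : β → Prop) :
    (∃ i < j, p (s.orderEmbOfFin h i)) ↔ ∃ x ∈ s, x < s.orderEmbOfFin h j ∧ p x := by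
  constructor
  · rintro ⟨i, hij, hp⟩
    exact ⟨_, s.orderEmbOfFin_mem h i, (s.orderEmbOfFin h).lt_iff_lt.2 hij, hp⟩
  · rintro ⟨x, hx, hxj, hp⟩
    rw [← mem_coe, ← s.range_orderEmbOfFin h] at hx
    obtain ⟨i, rfl⟩ := hx
    exact ⟨i, (s.orderEmbOfFin h).lt_iff_lt.1 hxj, hp⟩

end Shelling

section Pseudosphere

variable {P V : Type*} [DecidableEq P] [DecidableEq V] {P' : Finset P} {S : P → Finset V}

theorem mem_pseudosphere {σ : Finset (P × V)} :
    σ ∈ Pseudosphere P' S ↔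
      (∀ x ∈ σ, x.1 ∈ P' ∧ x.2 ∈ S x.1) ∧ ∀ x ∈ σ, ∀ y ∈ σ, x.1 = y.1 → x = y := by
  simp only [Pseudosphere, mem_filter, mem_powerset, subset_iff, mem_biUnion, mem_image]
  refine and_congr_left fun _ => forall₂_congr fun x _ => ⟨?_, ?_⟩
  · rintro ⟨i, hi, v, hv, rfl⟩
    exact ⟨hi, hv⟩
  · exact fun ⟨hi, hv⟩ => ⟨x.1, hi, x.2, hv, rfl⟩

theorem isComplex_pseudosphere : IsComplex (Pseudosphere P' S) := by
  intro σ hσ τ hτ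
  rw [mem_pseudosphere] at hσ ⊢
  exact ⟨fun x hx => hσ.1 x (hτ hx), fun x hx y hy => hσ.2 x (hτ hx) y (hτ hy)⟩

end Pseudosphere

section ChoiceFunction

variable {ι P V : Type*} [Fintype ι] {P' : Finset P} (e : ι ≃ P')

def simplexOf (f : ι → V) : Finset (P × V) :=
  univ.map ⟨fun k => ((e k : P), f k), fun _ _ h => e.injective (Subtype.ext (congrArg Prod.fst h))⟩

variable {e}

theorem mem_simplexOf {f : ι → V} {x : P × V} :
    x ∈ simplexOf e f ↔ ∃ k, ((e k : P), f k) = x := by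
  simp only [simplexOf, mem_map, mem_univ, true_and]
  rfl

theorem mk_mem_simplexOf {f : ι → V} {k : ι} {v : V} :
    ((e k : P), v) ∈ simplexOf e f ↔ f k = v := by
  rw [mem_simplexOf]
  constructor
  · rintro ⟨l, hl⟩
    obtain rfl : l = k := e.injective (Subtype.ext (congrArg Prod.fst hl))
    exact congrArg Prod.snd hl
  · rintro rfl
    exact ⟨k, rfl⟩

theorem card_simplexOf (f : ι → V) : (simplexOf e f).card = Fintype.card ι := by
  simp [simplexOf]

theorem simplexOf_subset_simplexOf_iff {f g : ι → V} :
    simplexOf e f ⊆ simplexOf e g ↔ f = g := by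
  refine ⟨fun h => funext fun k => (mk_mem_simplexOf.1 (h (mk_mem_simplexOf.2 rfl))).symm, ?_⟩
  rintro rfl
  exact Subset.rfl

variable [DecidableEq P] [DecidableEq V] {S : P → Finset V}

theorem simplexOf_mem_pseudosphere {f : ι → V} (hf : ∀ k, f k ∈ S (e k)) :
    simplexOf e f ∈ Pseudosphere P' S := by
  rw [mem_pseudosphere]
  constructor
  · intro x hx
    obtain ⟨k, rfl⟩ := mem_simplexOf.1 hx
    exact ⟨(e k).2, hf k⟩
  · intro x hx y hy hxy
    obtain ⟨k, rfl⟩ := mem_simplexOf.1 hx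
    obtain ⟨l, rfl⟩ := mem_simplexOf.1 hy
    obtain rfl : k = l := e.injective (Subtype.ext hxy)
    rfl

theorem exists_simplexOf_superset (hS : ∀ i ∈ P', (S i).Nonempty) {σ : Finset (P × V)}
    (hσ : σ ∈ Pseudosphere P' S) :
    ∃ f : ι → V, (∀ k, f k ∈ S (e k)) ∧ σ ⊆ simplexOf e f := by
  obtain ⟨hσS, hσfun⟩ := mem_pseudosphere.1 hσ
  have hvalue : ∀ k, ∃ v ∈ S (e k), ∀ x ∈ σ, x.1 = e k → x.2 = v := by
    intro k
    by_cases hk : ∃ x ∈ σ, x.1 = e k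
    · obtain ⟨x, hx, hxk⟩ := hk
      exact ⟨x.2, hxk ▸ (hσS x hx).2, fun y hy hyk =>
        congrArg Prod.snd (hσfun y hy x hx (hyk.trans hxk.symm))⟩
    · obtain ⟨v, hv⟩ := hS _ (e k).2
      exact ⟨v, hv, fun x hx hxk => absurd ⟨x, hx, hxk⟩ hk⟩
  choose f hfS hf using hvalue
  refine ⟨f, hfS, fun x hx => ?_⟩
  set k := e.symm ⟨x.1, (hσS x hx).1⟩
  have hk : (e k : P) = x.1 := by simp [k]
  rw [← Prod.mk.eta (p := x), ← hk, mk_mem_simplexOf, hf k x hx hk.symm]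

theorem isFacet_pseudosphere_iff (hS : ∀ i ∈ P', (S i).Nonempty) {σ : Finset (P × V)} :
    IsFacet (Pseudosphere P' S) σ ↔ ∃ f : ι → V, (∀ k, f k ∈ S (e k)) ∧ simplexOf e f = σ := by
  constructor
  · rintro ⟨hσ, hmax⟩
    obtain ⟨f, hf, hσf⟩ := exists_simplexOf_superset (e := e) hS hσ
    exact ⟨f, hf, (hmax _ (simplexOf_mem_pseudosphere hf) hσf).symm⟩
  · rintro ⟨f, hf, rfl⟩
    refine ⟨simplexOf_mem_pseudosphere hf, fun τ hτ hfτ => ?_⟩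
    obtain ⟨g, -, hτg⟩ := exists_simplexOf_superset (e := e) hS hτ
    obtain rfl := simplexOf_subset_simplexOf_iff.1 (hfτ.trans hτg)
    exact hfτ.antisymm hτg

end ChoiceFunction

section Lex

variable {ι P V : Type*} [Fintype ι] [LinearOrder ι] [LinearOrder V] {P' : Finset P}
  {e : ι ≃ P'} {S : P → Finset V}

theorem exists_toLex_lt_superset_iff {f : ι → V} (hf : ∀ k, f k ∈ S (e k))
    {τ : Finset (P × V)} (hτ : τ ⊆ simplexOf e f) :
    (∃ g : ι → V, (∀ k, g k ∈ S (e k)) ∧ toLex g < toLex f ∧ τ ⊆ simplexOf e g) ↔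
      ¬ (simplexOf e f).filter (fun x => ∃ w ∈ S x.1, w < x.2) ⊆ τ := by
  rw [not_subset]
  constructor
  · rintro ⟨g, hg, ⟨k, -, hk⟩, hτg⟩
    refine ⟨((e k : P), f k), mem_filter.2 ⟨mk_mem_simplexOf.2 rfl, g k, hg k, hk⟩,
      fun hkτ => hk.ne (mk_mem_simplexOf.1 (hτg hkτ))⟩
  · rintro ⟨x, hx, hxτ⟩
    obtain ⟨hxf, w, hw, hwx⟩ := mem_filter.1 hx
    obtain ⟨k, rfl⟩ := mem_simplexOf.1 hxf
    refine ⟨Function.update f k w, fun l => ?_, Pi.toLex_update_lt_self_iff.2 hwx,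
      fun y hy => ?_⟩
    · rcases eq_or_ne l k with rfl | hl
      · simpa using hw
      · simpa [hl] using hf l
    · obtain ⟨l, rfl⟩ := mem_simplexOf.1 (hτ hy)
      have hl : l ≠ k := by
        rintro rfl
        exact hxτ hy
      rw [mk_mem_simplexOf, Function.update_of_ne hl]

end Lex

theorem isShellable_pseudosphere {P V : Type*} [DecidableEq P] [DecidableEq V] {P' : Finset P}
    {S : P → Finset V} (hS : ∀ i ∈ P', (S i).Nonempty) : IsShellable (Pseudosphere P' S) := by
  set e := P'.equivFin.symm
  let : LinearOrder V := IsWellOrder.linearOrder WellOrderingRel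
  set T : Finset (Lex (Fin P'.card → V)) :=
    (Fintype.piFinset fun k => S (e k)).map toLex.toEmbedding
  have hT : ∀ g, toLex g ∈ T ↔ ∀ k, g k ∈ S (e k) := by simp [T]
  obtain ⟨t, ht⟩ : ∃ t, T.card = t + 1 := Nat.exists_eq_add_one.2 <| card_pos.2 <|
    (Fintype.piFinset_nonempty.2 fun k => hS _ (e k).2).map
  set G := T.orderEmbOfFin ht
  have hG : ∀ j k, ofLex (G j) k ∈ S (e k) := fun j => (hT _).1 (T.orderEmbOfFin_mem ht j)
  refine ⟨t, fun j => simplexOf e (ofLex (G j)), fun i j hij => ?_, fun σ => ?_, fun j hj => ?_⟩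
  · exact G.injective (simplexOf_subset_simplexOf_iff.1 hij.subset)
  · rw [isFacet_pseudosphere_iff (e := e) hS]
    constructor
    · rintro ⟨f, hf, rfl⟩
      have hfT : toLex f ∈ (Set.range G) := by
        rw [T.range_orderEmbOfFin ht]
        exact (hT f).2 hf
      obtain ⟨i, hi⟩ := hfT
      exact ⟨i, by simp [hi]⟩
    · rintro ⟨i, rfl⟩
      exact ⟨_, hG i, rfl⟩
  · refine shellingComplex_pure_of_restriction
      (fun j => (simplexOf e (ofLex (G j))).filter fun x => ∃ w ∈ S x.1, w < x.2)
      (fun j => filter_subset _ _) (fun j τ hτ => ?_) hj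
    rw [exists_lt_orderEmbOfFin_iff ht j (fun g => τ ⊆ simplexOf e (ofLex g)),
      ← exists_toLex_lt_superset_iff (hG j) hτ]
    constructor
    · rintro ⟨g, hgT, hg⟩
      exact ⟨ofLex g, (hT _).1 hgT, hg⟩
    · rintro ⟨g, hgS, hg⟩
      exact ⟨toLex g, (hT g).2 hgS, hg⟩

theorem stmt1_general {P V : Type*} [DecidableEq P] [DecidableEq V]
    (P' : Finset P)
    (S : P → Finset V) (hS : ∀ i ∈ P', (S i).Nonempty) :
    IsComplex (Pseudosphere P' S) ∧
    (∃ σ ∈ Pseudosphere P' S, σ.card = P'.card) ∧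
    (∀ σ, IsFacet (Pseudosphere P' S) σ → σ.card = P'.card) ∧
    IsShellable (Pseudosphere P' S) := by
  set e := P'.equivFin.symm
  refine ⟨isComplex_pseudosphere, ?_, fun σ hσ => ?_, isShellable_pseudosphere hS⟩
  · choose f hf using fun k => hS _ (e k).2
    exact ⟨simplexOf e f, simplexOf_mem_pseudosphere hf, by simp [card_simplexOf]⟩
  · obtain ⟨f, -, rfl⟩ := (isFacet_pseudosphere_iff (e := e) hS).1 hσ
    simp [card_simplexOf]

/-- every pseudosphere with nonempty finite index set `P'` and nonempty
value sets `S i` (`i ∈ P'`) is a pure simplicial complex of dimension `|P'| - 1`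
(i.e. it has a simplex of cardinality `|P'|` and all its facets have cardinality
`|P'|`) whose facets admit a shelling order. -/
theorem stmt1 {P V : Type*} [DecidableEq P] [DecidableEq V]
    (P' : Finset P) (hP' : P'.Nonempty)
    (S : P → Finset V) (hS : ∀ i ∈ P', (S i).Nonempty) :
    IsComplex (Pseudosphere P' S) ∧
    (∃ σ ∈ Pseudosphere P' S, σ.card = P'.card) ∧
    (∀ σ, IsFacet (Pseudosphere P' S) σ → σ.card = P'.card) ∧
    IsShellable (Pseudosphere P' S) :=
  stmt1_general P' S hS
end

section
/- For every name-view simplex σ of dimension m and every integer D with 0 ≤ D ≤ m, the crash-failure operator image C_D(σ) is a pure simplicial complex of dimension D, and C_D(σ) is shellable. -/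
/-- A name-view simplex: a finite set of (process, view) pairs whose first
coordinates are pairwise distinct. -/
def IsNameView {P V : Type*} (σ : Finset (P × V)) : Prop :=
  ∀ x ∈ σ, ∀ y ∈ σ, x.1 = y.1 → x = y

/-- The crash-failure operator
`C_D(σ) = ⋃_{τ ∈ Faces^D(σ)} Ψ(names(τ), S^{τ,σ})`,
where for `p ∈ names(τ)` the value set `S^{τ,σ}_p` is the set of all
name-view simplexes `μ` with `τ ⊆ μ ⊆ σ`. -/
def crashOp {P V : Type*} [DecidableEq P] [DecidableEq V] (D : ℕ)
    (σ : Finset (P × V)) : Finset (Finset (P × Finset (P × V))) :=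
  (σ.powerset.filter (fun τ => τ.card = D + 1)).biUnion
    (fun τ => Pseudosphere (τ.image Prod.fst)
      (fun _ => σ.powerset.filter (fun μ => τ ⊆ μ)))

/-!
A facet of `C_D(σ)` is a name-view simplex `F` with `D + 1` names, all in `σ`, each of whose
views contains the face of `σ` carrying the names of `F`. Order the facets by the colex order of
their name sets (read through an injection of the names into `ℕ`), and facets with the same names
by decreasing total size of their views. For an earlier facet `E` and a later one `F` there is
an earlier facet meeting `F` in a codimension-one face that contains `E ∩ F`:
* if some vertex of `F \ E` has a view smaller than `σ`, enlarge that view to `σ`;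
* otherwise the name sets differ (equal ones would make `F` come before `E`), and the colex-largest
  name of `F` missing from `E` can be traded for a name of `E` missing from `F`, with view `σ`.
-/

open Finset

section Shelling

variable {α : Type*} [DecidableEq α]

lemma exists_enumeration_monotone {β γ : Type*} [LinearOrder γ] {S : Finset β}
    (hS : S.Nonempty) (f : β → γ) :
    ∃ (t : ℕ) (φ : Fin (t + 1) → β), Function.Injective φ ∧ (∀ b, b ∈ S ↔ ∃ i, φ i = b) ∧
      Monotone (f ∘ φ) := by
  obtain ⟨t, ht⟩ : ∃ t, S.card = t + 1 := ⟨S.card - 1, by have := hS.card_pos; omega⟩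
  let e : Fin (t + 1) ≃ S := (S.equivFin.trans (finCongr ht)).symm
  let π := Tuple.sort (fun i => f (e i))
  refine ⟨t, fun i => e (π i), Subtype.val_injective.comp (e.injective.comp π.injective),
    fun b => ⟨fun hb => ⟨π.symm (e.symm ⟨b, hb⟩), by simp⟩, fun ⟨i, hi⟩ => hi ▸ (e (π i)).2⟩,
    Tuple.monotone_sort (fun i => f (e i))⟩

lemma exists_erase_mem_shellingComplex {t : ℕ} {φ : Fin (t + 1) → Finset α}
    (hex : ∀ i j, i < j → ∃ k < j, ∃ w ∈ φ j, w ∉ φ i ∧ (φ j).erase w ⊆ φ k)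
    {j : Fin (t + 1)} {τ : Finset α} (hτ : τ ∈ ShellingComplex φ j) :
    ∃ w ∈ φ j, τ ⊆ (φ j).erase w ∧ (φ j).erase w ∈ ShellingComplex φ j := by
  simp only [ShellingComplex, mem_filter, mem_powerset] at hτ ⊢
  obtain ⟨hτj, i, hij, hτi⟩ := hτ
  obtain ⟨k, hkj, w, hwj, hwi, hk⟩ := hex i j hij
  exact ⟨w, hwj, fun x hx => mem_erase.2 ⟨fun h => hwi (h ▸ hτi hx), hτj hx⟩,
    erase_subset _ _, k, hkj, hk⟩

theorem isShellable_of_exchange {K : Finset (Finset α)} {γ : Type*} [LinearOrder γ]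
    (key : Finset α → γ) (hne : ∃ s, IsFacet K s)
    (hex : ∀ E F, IsFacet K E → IsFacet K F → E ≠ F → key E ≤ key F →
      ∃ F', IsFacet K F' ∧ key F' < key F ∧ ∃ w ∈ F, w ∉ E ∧ F.erase w ⊆ F') :
    IsShellable K := by
  classical
  obtain ⟨s, hs⟩ := hne
  obtain ⟨t, φ, hinj, hφ, hmono⟩ :=
    exists_enumeration_monotone (S := K.filter (IsFacet K)) ⟨s, mem_filter.2 ⟨hs.1, hs⟩⟩ key
  have hfacet : ∀ s, IsFacet K s ↔ ∃ i, φ i = s := fun s => by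
    rw [← hφ, mem_filter]; exact ⟨fun h => ⟨h.1, h⟩, And.right⟩
  have hφex : ∀ i j, i < j → ∃ k < j, ∃ w ∈ φ j, w ∉ φ i ∧ (φ j).erase w ⊆ φ k := by
    intro i j hij
    obtain ⟨F', hF', hlt, w, hw, hwi, hsub⟩ := hex (φ i) (φ j) ((hfacet _).2 ⟨i, rfl⟩)
      ((hfacet _).2 ⟨j, rfl⟩) (hinj.ne hij.ne) (hmono hij.le)
    obtain ⟨k, rfl⟩ := (hfacet F').1 hF'
    exact ⟨k, lt_of_not_ge fun hjk => (hmono hjk).not_gt hlt, w, hw, hwi, hsub⟩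
  refine ⟨t, φ, hinj, hfacet, fun j hj => ⟨?_, ?_⟩⟩
  · have h0 : (∅ : Finset α) ∈ ShellingComplex φ j := by
      simp only [ShellingComplex, mem_filter, mem_powerset]
      exact ⟨empty_subset _, 0, hj, empty_subset _⟩
    obtain ⟨w, hw, -, hmem⟩ := exists_erase_mem_shellingComplex hφex h0
    exact ⟨_, hmem, card_erase_of_mem hw⟩
  · rintro τ ⟨hτ, hmax⟩
    obtain ⟨w, hw, hsub, hmem⟩ := exists_erase_mem_shellingComplex hφex hτ
    rw [hmax _ hmem hsub, card_erase_of_mem hw]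

end Shelling

section NameView

variable {P X : Type*}

lemma IsNameView.mono {s t : Finset (P × X)} (hs : IsNameView s) (h : t ⊆ s) : IsNameView t :=
  fun x hx y hy => hs x (h hx) y (h hy)

variable [DecidableEq P]

def names (s : Finset (P × X)) : Finset P := s.image Prod.fst

lemma mem_names {s : Finset (P × X)} {p : P} : p ∈ names s ↔ ∃ w ∈ s, w.1 = p :=
  mem_image

lemma mem_names_of_mem {s : Finset (P × X)} {w : P × X} (hw : w ∈ s) : w.1 ∈ names s :=
  mem_image_of_mem _ hw

lemma names_mono {s t : Finset (P × X)} (h : s ⊆ t) : names s ⊆ names t :=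
  image_subset_image h

lemma IsNameView.card_names {s : Finset (P × X)} (hs : IsNameView s) :
    (names s).card = s.card :=
  card_image_of_injOn fun x hx y hy => hs x hx y hy

def restrictNames (σ : Finset (P × X)) (N : Finset P) : Finset (P × X) :=
  σ.filter (·.1 ∈ N)

lemma restrictNames_subset (σ : Finset (P × X)) (N : Finset P) : restrictNames σ N ⊆ σ :=
  filter_subset _ _

lemma mem_restrictNames {σ : Finset (P × X)} {N : Finset P} {x : P × X} :
    x ∈ restrictNames σ N ↔ x ∈ σ ∧ x.1 ∈ N :=
  mem_filter

lemma names_restrictNames {σ : Finset (P × X)} {N : Finset P} (hN : N ⊆ names σ) :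
    names (restrictNames σ N) = N := by
  ext p
  simp only [mem_names, mem_restrictNames]
  refine ⟨fun ⟨x, ⟨_, hx⟩, hxp⟩ => hxp ▸ hx, fun hp => ?_⟩
  obtain ⟨x, hx, rfl⟩ := mem_names.1 (hN hp)
  exact ⟨x, ⟨hx, hp⟩, rfl⟩

lemma IsNameView.restrictNames_names {σ τ : Finset (P × X)} (hσ : IsNameView σ) (hτ : τ ⊆ σ) :
    restrictNames σ (names τ) = τ := by
  ext x
  rw [mem_restrictNames, mem_names]
  refine ⟨fun ⟨hx, y, hy, hyx⟩ => hσ y (hτ hy) x hx hyx ▸ hy, fun hx => ⟨hτ hx, x, hx, rfl⟩⟩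

variable [DecidableEq X]

lemma names_insert (w : P × X) (s : Finset (P × X)) : names (insert w s) = insert w.1 (names s) :=
  image_insert _ _ _

lemma IsNameView.fst_notMem_names_erase {s : Finset (P × X)} (hs : IsNameView s) {w : P × X}
    (hw : w ∈ s) : w.1 ∉ names (s.erase w) := by
  rw [mem_names]
  rintro ⟨u, hu, hu1⟩
  exact (mem_erase.1 hu).1 (hs u (mem_of_mem_erase hu) w hw hu1)

end NameView

section CrashOperator

variable {P V : Type*} [DecidableEq P] [DecidableEq V]

lemma mem_crashOp {D : ℕ} {σ : Finset (P × V)} {s : Finset (P × Finset (P × V))} :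
    s ∈ crashOp D σ ↔ ∃ τ ⊆ σ, τ.card = D + 1 ∧ IsNameView s ∧
      ∀ w ∈ s, w.1 ∈ names τ ∧ τ ⊆ w.2 ∧ w.2 ⊆ σ := by
  simp only [crashOp, Pseudosphere, mem_biUnion, mem_filter, mem_powerset, IsNameView]
  refine exists_congr fun τ => ⟨fun ⟨⟨hτ, hcard⟩, hs, hnv⟩ => ⟨hτ, hcard, hnv, fun w hw => ?_⟩,
    fun ⟨hτ, hcard, hnv, hs⟩ => ⟨⟨hτ, hcard⟩, fun w hw => ?_, hnv⟩⟩
  · obtain ⟨p, hp, hw⟩ := mem_biUnion.1 (hs hw)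
    obtain ⟨μ, hμ, rfl⟩ := mem_image.1 hw
    rw [mem_filter, mem_powerset] at hμ
    exact ⟨hp, hμ.2, hμ.1⟩
  · obtain ⟨hp, hτw, hwσ⟩ := hs w hw
    exact mem_biUnion.2 ⟨w.1, hp, mem_image.2 ⟨w.2, mem_filter.2 ⟨mem_powerset.2 hwσ, hτw⟩, rfl⟩⟩

variable {D : ℕ} {σ : Finset (P × V)}

lemma isComplex_crashOp : IsComplex (crashOp D σ) := by
  intro s hs t hts
  obtain ⟨τ, hτ, hcard, hnv, hw⟩ := mem_crashOp.1 hs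
  exact mem_crashOp.2 ⟨τ, hτ, hcard, hnv.mono hts, fun w h => hw w (hts h)⟩

lemma card_le_of_mem_crashOp {s : Finset (P × Finset (P × V))} (hs : s ∈ crashOp D σ) :
    s.card ≤ D + 1 := by
  obtain ⟨τ, -, hcard, hnv, hw⟩ := mem_crashOp.1 hs
  calc s.card = (names s).card := hnv.card_names.symm
    _ ≤ (names τ).card := card_le_card fun p hp => by
        obtain ⟨w, hw', rfl⟩ := mem_names.1 hp
        exact (hw w hw').1
    _ ≤ D + 1 := hcard ▸ card_image_le

lemma exists_card_eq_of_mem_crashOp (hσ : IsNameView σ) {s : Finset (P × Finset (P × V))}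
    (hs : s ∈ crashOp D σ) : ∃ t ∈ crashOp D σ, s ⊆ t ∧ t.card = D + 1 := by
  obtain ⟨τ, hτ, hcard, hnv, hviews⟩ := mem_crashOp.1 hs
  have hsτ : names s ⊆ names τ := fun p hp => by
    obtain ⟨w, hw', rfl⟩ := mem_names.1 hp
    exact (hviews w hw').1
  set t := s ∪ (names τ \ names s).image (fun p => (p, σ))
  have hmem : ∀ w ∈ t, w ∈ s ∨ w.1 ∈ names τ \ names s ∧ w.2 = σ := by
    intro w hw
    rcases mem_union.1 hw with h | h
    · exact Or.inl h
    · obtain ⟨p, hp, rfl⟩ := mem_image.1 h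
      exact Or.inr ⟨hp, rfl⟩
  have hnvt : IsNameView t := by
    intro x hx y hy hxy
    rcases hmem x hx with hx | ⟨hx1, hx2⟩ <;> rcases hmem y hy with hy | ⟨hy1, hy2⟩
    · exact hnv x hx y hy hxy
    · exact absurd (hxy ▸ mem_names_of_mem hx) (mem_sdiff.1 hy1).2
    · exact absurd (hxy ▸ mem_names_of_mem hy) (mem_sdiff.1 hx1).2
    · exact Prod.ext hxy (hx2.trans hy2.symm)
  have hnames : names t = names τ := by
    rw [names, image_union, image_image, Function.comp_def, image_id', ← names]
    exact union_sdiff_of_subset hsτ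
  refine ⟨t, mem_crashOp.2 ⟨τ, hτ, hcard, hnvt, fun w hw => ?_⟩, subset_union_left, ?_⟩
  · rcases hmem w hw with h | ⟨h1, h2⟩
    · exact hviews w h
    · exact ⟨(mem_sdiff.1 h1).1, h2 ▸ hτ, h2 ▸ Subset.rfl⟩
  · rw [← hnvt.card_names, hnames, (hσ.mono hτ).card_names, hcard]

lemma isFacet_crashOp_iff_card (hσ : IsNameView σ) {s : Finset (P × Finset (P × V))} :
    IsFacet (crashOp D σ) s ↔ s ∈ crashOp D σ ∧ s.card = D + 1 := by
  refine ⟨fun ⟨hs, hmax⟩ => ⟨hs, ?_⟩, fun ⟨hs, hcard⟩ => ⟨hs, fun t ht hst => ?_⟩⟩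
  · obtain ⟨t, ht, hst, hcard⟩ := exists_card_eq_of_mem_crashOp hσ hs
    rwa [hmax t ht hst]
  · exact eq_of_subset_of_card_le hst (hcard ▸ card_le_of_mem_crashOp ht)

lemma isFacet_crashOp_iff (hσ : IsNameView σ) {s : Finset (P × Finset (P × V))} :
    IsFacet (crashOp D σ) s ↔ IsNameView s ∧ names s ⊆ names σ ∧ (names s).card = D + 1 ∧
      ∀ w ∈ s, restrictNames σ (names s) ⊆ w.2 ∧ w.2 ⊆ σ := by
  rw [isFacet_crashOp_iff_card hσ, mem_crashOp]
  constructor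
  · rintro ⟨⟨τ, hτ, hcard, hnv, hviews⟩, hs⟩
    have hsτ : names s = names τ := by
      refine eq_of_subset_of_card_le (fun p hp => ?_) ?_
      · obtain ⟨w, hw, rfl⟩ := mem_names.1 hp
        exact (hviews w hw).1
      · rw [(hσ.mono hτ).card_names, hcard, hnv.card_names, hs]
    rw [hsτ, hσ.restrictNames_names hτ]
    exact ⟨hnv, names_mono hτ, (hσ.mono hτ).card_names.trans hcard,
      fun w hw => (hviews w hw).2⟩
  · rintro ⟨hnv, hsσ, hcard, hviews⟩
    refine ⟨⟨restrictNames σ (names s), restrictNames_subset _ _, ?_, hnv, fun w hw => ?_⟩, ?_⟩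
    · rw [← (hσ.mono (restrictNames_subset _ _)).card_names, names_restrictNames hsσ, hcard]
    · rw [names_restrictNames hsσ]
      exact ⟨mem_names_of_mem hw, hviews w hw⟩
    · rw [← hnv.card_names, hcard]

lemma exists_isFacet_crashOp (hσ : IsNameView σ) (hD : D + 1 ≤ (names σ).card) :
    ∃ s, IsFacet (crashOp D σ) s := by
  obtain ⟨N, hN, hcard⟩ := exists_subset_card_eq hD
  have hnames : names (N.image fun p => (p, σ)) = N := by
    rw [names, image_image, Function.comp_def, image_id']
  refine ⟨N.image fun p => (p, σ), (isFacet_crashOp_iff hσ).2 ⟨?_, ?_, ?_, ?_⟩⟩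
  · intro x hx y hy hxy
    obtain ⟨p, -, rfl⟩ := mem_image.1 hx
    obtain ⟨q, -, rfl⟩ := mem_image.1 hy
    rw [show p = q from hxy]
  · rwa [hnames]
  · rwa [hnames]
  · intro w hw
    obtain ⟨p, -, rfl⟩ := mem_image.1 hw
    exact ⟨restrictNames_subset _ _, Subset.rfl⟩

lemma IsFacet.insert_erase (hσ : IsNameView σ) {F : Finset (P × Finset (P × V))}
    (hF : IsFacet (crashOp D σ) F) {w : P × Finset (P × V)} (hw : w ∈ F) {q : P}
    (hq : q ∈ names σ) (hqF : q ∉ names (F.erase w))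
    (hseen : ∀ u ∈ F.erase w, ∀ x ∈ σ, x.1 = q → x ∈ u.2) :
    IsFacet (crashOp D σ) (insert (q, σ) (F.erase w)) := by
  rw [isFacet_crashOp_iff hσ] at hF ⊢
  obtain ⟨hnv, hFσ, hcard, hviews⟩ := hF
  have herase : names (F.erase w) ⊆ names F := names_mono (erase_subset _ _)
  rw [names_insert]
  refine ⟨?_, insert_subset hq (herase.trans hFσ), ?_, ?_⟩
  · intro x hx y hy hxy
    rcases mem_insert.1 hx with rfl | hx <;> rcases mem_insert.1 hy with rfl | hy
    · rfl
    · exact absurd ((show q = y.1 from hxy) ▸ mem_names_of_mem hy) hqF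
    · exact absurd ((show x.1 = q from hxy) ▸ mem_names_of_mem hx) hqF
    · exact hnv x (mem_of_mem_erase hx) y (mem_of_mem_erase hy) hxy
  · rw [card_insert_of_notMem hqF, (hnv.mono (erase_subset _ _)).card_names,
      card_erase_of_mem hw, ← hnv.card_names, hcard, Nat.add_sub_cancel]
  · intro u hu
    rcases mem_insert.1 hu with rfl | hu
    · exact ⟨restrictNames_subset _ _, Subset.rfl⟩
    refine ⟨fun x hx => ?_, (hviews u (mem_of_mem_erase hu)).2⟩
    obtain ⟨hxσ, hxq | hxF⟩ := mem_restrictNames.1 hx |>.imp_right mem_insert.1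
    · exact hseen u hu x hxσ hxq
    · exact (hviews u (mem_of_mem_erase hu)).1 (mem_restrictNames.2 ⟨hxσ, herase hxF⟩)

lemma IsFacet.enlarge_view (hσ : IsNameView σ) {F : Finset (P × Finset (P × V))}
    (hF : IsFacet (crashOp D σ) F) {w : P × Finset (P × V)} (hw : w ∈ F) :
    IsFacet (crashOp D σ) (insert (w.1, σ) (F.erase w)) := by
  obtain ⟨hnv, hFσ, -, hviews⟩ := (isFacet_crashOp_iff hσ).1 hF
  refine hF.insert_erase hσ hw (hFσ (mem_names_of_mem hw)) (hnv.fst_notMem_names_erase hw)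
    fun u hu x hx hxw => (hviews u (mem_of_mem_erase hu)).1 ?_
  exact mem_restrictNames.2 ⟨hx, hxw ▸ mem_names_of_mem hw⟩

end CrashOperator

section ShellingOrder

variable {P V : Type*} [DecidableEq P] [DecidableEq V] {D : ℕ} {σ : Finset (P × V)}
  {ι : P → ℕ}

lemma toColex_image_insert_lt {N M : Finset P} {p q : P} (hι : Set.InjOn ι N) (hp : p ∈ N)
    (hM : M ⊆ N) (hpM : p ∉ M) (hqp : ι q < ι p) :
    toColex ((insert q M).image ι) < toColex (N.image ι) := by
  rw [Colex.toColex_lt_toColex_iff_exists_forall_lt, image_insert]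
  refine ⟨ι p, mem_image_of_mem _ hp, ?_, fun b hb hbN => ?_⟩
  · rw [mem_insert, mem_image]
    rintro (h | ⟨r, hr, hrp⟩)
    · exact hqp.ne' h
    · exact hpM (hι (hM hr) hp hrp ▸ hr)
  · rcases mem_insert.1 hb with rfl | hb
    · exact hqp
    · exact absurd (image_subset_image hM hb) hbN

def viewDeficit (σ : Finset (P × V)) (s : Finset (P × Finset (P × V))) : ℕ :=
  ∑ w ∈ s, (σ \ w.2).card

def crashKey (ι : P → ℕ) (σ : Finset (P × V)) (s : Finset (P × Finset (P × V))) :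
    Colex (Finset ℕ) ×ₗ ℕ :=
  toLex (toColex ((names s).image ι), viewDeficit σ s)

lemma crashKey_insert_erase_lt {F : Finset (P × Finset (P × V))} (hF : IsNameView F)
    {w : P × Finset (P × V)} (hw : w ∈ F) (hwσ : w.2 ⊂ σ) :
    crashKey ι σ (insert (w.1, σ) (F.erase w)) < crashKey ι σ F := by
  have hnames : names (insert (w.1, σ) (F.erase w)) = names F := by
    conv_rhs => rw [← insert_erase hw]
    rw [names_insert, names_insert]
  have hnotin : (w.1, σ) ∉ F.erase w :=
    fun h => hF.fst_notMem_names_erase hw (mem_names.2 ⟨_, h, rfl⟩)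
  have hpos : 0 < (σ \ w.2).card := card_pos.2 (sdiff_nonempty.2 (not_subset_of_ssubset hwσ))
  rw [crashKey, crashKey, Prod.Lex.toLex_lt_toLex, hnames]
  refine Or.inr ⟨rfl, ?_⟩
  rw [viewDeficit, viewDeficit, sum_insert hnotin, ← add_sum_erase _ _ hw, Finset.sdiff_self,
    card_empty]
  omega

lemma viewDeficit_lt_of_names_eq (hσ : IsNameView σ) {E F : Finset (P × Finset (P × V))}
    (hE : IsFacet (crashOp D σ) E) (hF : IsFacet (crashOp D σ) F) (hne : E ≠ F)
    (hnames : names E = names F) (hfull : ∀ w ∈ F, w ∉ E → w.2 = σ) :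
    viewDeficit σ F < viewDeficit σ E := by
  obtain ⟨hnvE, -, -, hviewsE⟩ := (isFacet_crashOp_iff hσ).1 hE
  obtain ⟨hnvF, -, -, -⟩ := (isFacet_crashOp_iff hσ).1 hF
  have hF0 : ∑ w ∈ F \ E, (σ \ w.2).card = 0 := sum_eq_zero fun w hw => by
    rw [hfull w (mem_sdiff.1 hw).1 (mem_sdiff.1 hw).2, Finset.sdiff_self, card_empty]
  obtain ⟨u, hu⟩ : (E \ F).Nonempty := sdiff_nonempty.2 fun hEF => hne <|
    eq_of_subset_of_card_le hEF (by rw [← hnvF.card_names, ← hnvE.card_names, hnames])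
  obtain ⟨huE, huF⟩ := mem_sdiff.1 hu
  -- the vertex of `F` named like `u` is not in `E`, so it has the full view, unlike `u`
  have huσ : u.2 ≠ σ := by
    obtain ⟨w, hwF, hwu⟩ := mem_names.1 (hnames ▸ mem_names_of_mem huE)
    have hwE : w ∉ E := fun hwE => huF (hnvE w hwE u huE hwu ▸ hwF)
    exact fun huσ => huF (Prod.ext hwu ((hfull w hwF hwE).trans huσ.symm) ▸ hwF)
  have hpos : 0 < ∑ w ∈ E \ F, (σ \ w.2).card :=
    (card_pos.2 (sdiff_nonempty.2 fun h => huσ (Subset.antisymm (hviewsE u huE).2 h))).trans_le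
      (single_le_sum (f := fun w => (σ \ w.2).card) (fun _ _ => Nat.zero_le _) hu)
  calc viewDeficit σ F = ∑ w ∈ E ∩ F, (σ \ w.2).card := by
        rw [viewDeficit, ← sum_inter_add_sum_sdiff F E, hF0, add_zero, inter_comm]
    _ < ∑ w ∈ E ∩ F, (σ \ w.2).card + ∑ w ∈ E \ F, (σ \ w.2).card := by omega
    _ = viewDeficit σ E := sum_inter_add_sum_sdiff _ _ _

lemma exists_isFacet_crashKey_lt_of_toColex_lt (hσ : IsNameView σ) (hι : Set.InjOn ι (names σ))
    {E F : Finset (P × Finset (P × V))}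
    (hE : IsFacet (crashOp D σ) E) (hF : IsFacet (crashOp D σ) F)
    (hlt : toColex ((names E).image ι) < toColex ((names F).image ι))
    (hfull : ∀ w ∈ F, w ∉ E → w.2 = σ) :
    ∃ F', IsFacet (crashOp D σ) F' ∧ crashKey ι σ F' < crashKey ι σ F ∧
      ∃ w ∈ F, w ∉ E ∧ F.erase w ⊆ F' := by
  obtain ⟨-, hEσ, hcardE, hviewsE⟩ := (isFacet_crashOp_iff hσ).1 hE
  obtain ⟨hnvF, hFσ, hcardF, -⟩ := (isFacet_crashOp_iff hσ).1 hF
  obtain ⟨a, haF, haE, hmax⟩ := Colex.toColex_lt_toColex_iff_exists_forall_lt.1 hlt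
  obtain ⟨p, hpF, rfl⟩ := mem_image.1 haF
  obtain ⟨w, hwF, rfl⟩ := mem_names.1 hpF
  have hwE : w ∉ E := fun h => haE (mem_image_of_mem _ (mem_names_of_mem h))
  obtain ⟨q, hqE, hqF⟩ := not_subset.1 fun hsub => hlt.ne <| by
    rw [eq_of_subset_of_card_le hsub (hcardF.trans hcardE.symm).le]
  have hqw : ι q < ι w.1 := hmax _ (mem_image_of_mem _ hqE) fun h => by
    obtain ⟨r, hr, hrq⟩ := mem_image.1 h
    exact hqF (hι (hFσ hr) (hEσ hqE) hrq ▸ hr)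
  have hF' := hF.insert_erase hσ hwF (hEσ hqE) (fun h => hqF (names_mono (erase_subset _ _) h))
    fun u hu x hx hxq => by
      by_cases huE : u ∈ E
      · exact (hviewsE u huE).1 (mem_restrictNames.2 ⟨hx, hxq ▸ hqE⟩)
      · exact hfull u (mem_of_mem_erase hu) huE ▸ hx
  refine ⟨_, hF', ?_, w, hwF, hwE, subset_insert _ _⟩
  rw [crashKey, crashKey, Prod.Lex.toLex_lt_toLex, names_insert]
  exact Or.inl (toColex_image_insert_lt (hι.mono hFσ) hpF (names_mono (erase_subset _ _))
    (hnvF.fst_notMem_names_erase hwF) hqw)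

theorem exists_isFacet_crashKey_lt (hσ : IsNameView σ) (hι : Set.InjOn ι (names σ))
    {E F : Finset (P × Finset (P × V))}
    (hE : IsFacet (crashOp D σ) E) (hF : IsFacet (crashOp D σ) F) (hne : E ≠ F)
    (hle : crashKey ι σ E ≤ crashKey ι σ F) :
    ∃ F', IsFacet (crashOp D σ) F' ∧ crashKey ι σ F' < crashKey ι σ F ∧
      ∃ w ∈ F, w ∉ E ∧ F.erase w ⊆ F' := by
  by_cases hraise : ∃ w ∈ F, w ∉ E ∧ w.2 ≠ σ
  · obtain ⟨w, hwF, hwE, hwσ⟩ := hraise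
    obtain ⟨hnvF, -, -, hviewsF⟩ := (isFacet_crashOp_iff hσ).1 hF
    exact ⟨_, hF.enlarge_view hσ hwF,
      crashKey_insert_erase_lt hnvF hwF ((hviewsF w hwF).2.ssubset_of_ne hwσ),
      w, hwF, hwE, subset_insert _ _⟩
  push Not at hraise
  rcases Prod.Lex.toLex_le_toLex.1 hle with hlt | ⟨heq, hle⟩
  · exact exists_isFacet_crashKey_lt_of_toColex_lt hσ hι hE hF hlt hraise
  · have hnames : names E = names F := by
      have hEσ := ((isFacet_crashOp_iff hσ).1 hE).2.1
      have hFσ := ((isFacet_crashOp_iff hσ).1 hF).2.1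
      rw [← coe_inj, ← (hι.image_eq_image_iff (coe_subset.2 hEσ) (coe_subset.2 hFσ)),
        ← coe_image, ← coe_image, coe_inj, ← toColex_inj]
      exact heq
    exact absurd hle (not_le.2 (viewDeficit_lt_of_names_eq hσ hE hF hne hnames hraise))

end ShellingOrder

/-- for every name-view simplex `σ` of dimension `m` (i.e. `|σ| = m + 1`)
and every `0 ≤ D ≤ m`, the crash-failure operator image `C_D(σ)` is a pure simplicial
complex of dimension `D` (it has a simplex of cardinality `D + 1` and all its facets
have cardinality `D + 1`), and `C_D(σ)` is shellable. -/
theorem stmt2 {P V : Type*} [DecidableEq P] [DecidableEq V]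
    (σ : Finset (P × V)) (hσ : IsNameView σ)
    (m D : ℕ) (hm : σ.card = m + 1) (hD : D ≤ m) :
    IsComplex (crashOp D σ) ∧
    (∃ s ∈ crashOp D σ, s.card = D + 1) ∧
    (∀ s, IsFacet (crashOp D σ) s → s.card = D + 1) ∧
    IsShellable (crashOp D σ) := by
  obtain ⟨s, hs⟩ := exists_isFacet_crashOp (D := D) hσ (by rw [hσ.card_names]; omega)
  obtain ⟨ι, hι⟩ : ∃ ι : P → ℕ, Set.InjOn ι (names σ) :=
    ⟨fun p => (names σ).toList.idxOf p, fun p hp _ _ h => (List.idxOf_inj (mem_toList.2 hp)).1 h⟩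
  exact ⟨isComplex_crashOp, ⟨s, (isFacet_crashOp_iff_card hσ).1 hs⟩,
    fun s hs => ((isFacet_crashOp_iff_card hσ).1 hs).2,
    isShellable_of_exchange (crashKey ι σ) ⟨s, hs⟩ fun _ _ => exists_isFacet_crashKey_lt hσ hι⟩
end

section
/- The crash-failure operator is a strict carrier map: for all compatible name-view simplexes σ and τ and every integer D ≥ 0, a nonempty finite set is a simplex of both C_D(σ) and C_D(τ) if and only if it is a simplex of C_D(σ ∩ τ). -/
lemma mem_crashOp_iff {P V : Type*} [DecidableEq P] [DecidableEq V] (D : ℕ)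
    (σ : Finset (P × V)) (s : Finset (P × Finset (P × V))) :
    s ∈ crashOp D σ ↔ ∃ t, t ⊆ σ ∧ t.card = D + 1 ∧
      (∀ x ∈ s, x.1 ∈ t.image Prod.fst ∧ t ⊆ x.2 ∧ x.2 ⊆ σ) ∧
      (∀ x ∈ s, ∀ y ∈ s, x.1 = y.1 → x = y) := by
  simp only [crashOp, Pseudosphere, Finset.mem_biUnion, Finset.mem_filter,
    Finset.mem_powerset]
  constructor
  · rintro ⟨t, ⟨htσ, htc⟩, hsub, hnv⟩
    refine ⟨t, htσ, htc, ?_, hnv⟩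
    intro x hx
    have := hsub hx
    simp only [Finset.mem_biUnion, Finset.mem_image, Finset.mem_filter,
      Finset.mem_powerset] at this
    obtain ⟨i, hi, v, ⟨hvσ, hvt⟩, hx'⟩ := this
    subst hx'
    exact ⟨Finset.mem_image.mpr hi, hvt, hvσ⟩
  · rintro ⟨t, htσ, htc, hmem, hnv⟩
    refine ⟨t, ⟨htσ, htc⟩, ?_, hnv⟩
    intro x hx
    obtain ⟨h1, h2, h3⟩ := hmem x hx
    simp only [Finset.mem_biUnion, Finset.mem_image, Finset.mem_filter,
      Finset.mem_powerset] at h1 ⊢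
    obtain ⟨a, ha, ha'⟩ := h1
    exact ⟨x.1, ⟨a, ha, ha'⟩, x.2, ⟨h3, h2⟩, rfl⟩

/-- the crash-failure operator is a strict carrier map. For all
compatible name-view simplexes `σ` and `τ` (i.e. `σ ∪ τ` is again a name-view
simplex) and every `D ≥ 0`, a nonempty finite set is a simplex of both `C_D(σ)` and
`C_D(τ)` if and only if it is a simplex of `C_D(σ ∩ τ)`. -/
theorem stmt3 {P V : Type*} [DecidableEq P] [DecidableEq V]
    (σ τ : Finset (P × V)) (hσ : IsNameView σ) (hτ : IsNameView τ)
    (hcompat : IsNameView (σ ∪ τ)) (D : ℕ)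
    (s : Finset (P × Finset (P × V))) (hs : s.Nonempty) :
    (s ∈ crashOp D σ ∧ s ∈ crashOp D τ) ↔ s ∈ crashOp D (σ ∩ τ) := by
  simp only [mem_crashOp_iff]
  constructor
  · rintro ⟨⟨t₁, ht₁σ, ht₁c, h₁, hnv⟩, ⟨t₂, ht₂τ, ht₂c, h₂, _⟩⟩
    obtain ⟨x, hx⟩ := hs
    have hxint : x.2 ⊆ σ ∩ τ :=
      Finset.subset_inter (h₁ x hx).2.2 (h₂ x hx).2.2
    refine ⟨t₁, (h₁ x hx).2.1.trans hxint, ht₁c, ?_, hnv⟩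
    intro y hy
    exact ⟨(h₁ y hy).1, (h₁ y hy).2.1,
      Finset.subset_inter (h₁ y hy).2.2 (h₂ y hy).2.2⟩
  · rintro ⟨t, htσ, htc, hmem, hnv⟩
    exact ⟨⟨t, htσ.trans Finset.inter_subset_left, htc,
        fun y hy => ⟨(hmem y hy).1, (hmem y hy).2.1,
          (hmem y hy).2.2.trans Finset.inter_subset_left⟩, hnv⟩,
      ⟨t, htσ.trans Finset.inter_subset_right, htc,
        fun y hy => ⟨(hmem y hy).1, (hmem y hy).2.1,
          (hmem y hy).2.2.trans Finset.inter_subset_right⟩, hnv⟩⟩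
end

section
/- In the gossip model with the relay property, where |P| = n+1, |B| ≤ t, and n+1 > 3t: if a process p ∈ P is validated on correct processes P_i and P_j, then cont_i(wp) = cont_j(wp) for every word w over P with 0 ≤ |w| < R. -/
/-- The relay property: for every correct process `q ∈ G`, every correct process
`i ∈ G`, and every word `w` with `|w| ≤ R`, `cont i (wq) = cont q w`. Words over
the alphabet of processes are lists, and `wq` is `w ++ [q]`. -/
def Relay {P Val : Type*} (G : Finset P) (R : ℕ) (cont : P → List P → Val) : Prop :=
  ∀ q ∈ G, ∀ i ∈ G, ∀ w : List P, w.length ≤ R → cont i (w ++ [q]) = cont q w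

/-- `Q` is a quorum of process `p` on (correct) process `i`: `p ∈ Q`,
`|Q| ≥ n + 1 - t`, and `cont i (wpq) = cont i (wp)` for every `q ∈ Q` and every
word `w` with `0 ≤ |w| < R`. -/
def IsQuorum {P Val : Type*} (n t R : ℕ) (cont : P → List P → Val)
    (Q : Finset P) (p i : P) : Prop :=
  p ∈ Q ∧ n + 1 - t ≤ Q.card ∧
  ∀ q ∈ Q, ∀ w : List P, w.length < R → cont i (w ++ [p, q]) = cont i (w ++ [p])

/-- `p` is validated on `i` if `p` has a quorum on `i`. -/
def Validated {P Val : Type*} (n t R : ℕ) (cont : P → List P → Val)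
    (p i : P) : Prop :=
  ∃ Q : Finset P, IsQuorum n t R cont Q p i

/-- in the gossip model with the relay property, where `|P| = n + 1`,
`|B| ≤ t` and `n + 1 > 3t`: if a process `p` is validated on correct processes `i`
and `j`, then `cont i (wp) = cont j (wp)` for every word `w` with `0 ≤ |w| < R`. -/
theorem stmt9 {P Val : Type*} [Fintype P] [DecidableEq P]
    (n t R : ℕ) (hR : 1 ≤ R) (hP : Fintype.card P = n + 1)
    (B : Finset P) (hB : B.card ≤ t) (hn : 3 * t < n + 1)
    (cont : P → List P → Val) (hrelay : Relay Bᶜ R cont)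
    (p i j : P) (hi : i ∈ Bᶜ) (hj : j ∈ Bᶜ)
    (hpi : Validated n t R cont p i) (hpj : Validated n t R cont p j) :
    ∀ w : List P, w.length < R → cont i (w ++ [p]) = cont j (w ++ [p]) := by
  intro w hw
  obtain ⟨Qi, hpQi, hQi, hqi⟩ := hpi
  obtain ⟨Qj, hpQj, hQj, hqj⟩ := hpj
  -- find a correct q in both quorums
  have hinter : t < (Qi ∩ Qj).card := by
    have hu : (Qi ∪ Qj).card ≤ n + 1 := by
      have := Finset.card_le_card (Finset.subset_univ (Qi ∪ Qj))
      simpa [Finset.card_univ, hP] using this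
    have := Finset.card_union_add_card_inter Qi Qj
    omega
  have hex : ∃ q, q ∈ Qi ∩ Qj ∧ q ∉ B := by
    by_contra h
    push_neg at h
    have : (Qi ∩ Qj) ⊆ B := fun x hx => h x hx
    have := Finset.card_le_card this
    omega
  obtain ⟨q, hq, hqB⟩ := hex
  rw [Finset.mem_inter] at hq
  have hqG : q ∈ Bᶜ := Finset.mem_compl.mpr hqB
  have hlen : (w ++ [p]).length ≤ R := by simp; omega
  have key : ∀ k, k ∈ Bᶜ → cont k (w ++ [p] ++ [q]) = cont q (w ++ [p]) :=
    fun k hk => hrelay q hqG k hk _ hlen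
  calc cont i (w ++ [p]) = cont i (w ++ [p, q]) := (hqi q hq.1 w hw).symm
    _ = cont q (w ++ [p]) := by
        rw [show w ++ [p, q] = w ++ [p] ++ [q] by simp] ; exact key i hi
    _ = cont j (w ++ [p, q]) := by
        rw [show w ++ [p, q] = w ++ [p] ++ [q] by simp] ; exact (key j hj).symm
    _ = cont j (w ++ [p]) := hqj q hq.2 w hw
end

section
/- In the gossip model with the relay property, where |P| = n+1, |B| = t, and n+1 > 3t, let w be a word over P with |w| = R−1 and let p ∈ P. Suppose a correct process P_j completes wp to the value v_j. If either (a) p is validated on a correct process P_i and v_i = cont_i(wp), or (b) a correct process P_i completes wp to the value v_i, then v_i = v_j. -/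
/-- Completion rule: for a word `wp` with `|w| = R - 1`, a correct process `j`
completes `wp` to the value `v` if at least `n + 1 - 2t` correct processes `q ∈ G`
satisfy `cont j (wpq) = v`. -/
def Completes {P Val : Type*} [DecidableEq P] [DecidableEq Val]
    (n t : ℕ) (cont : P → List P → Val) (G : Finset P)
    (j : P) (w : List P) (p : P) (v : Val) : Prop :=
  n + 1 - 2 * t ≤ (G.filter (fun q => cont j (w ++ [p, q]) = v)).card

/-- in the gossip model with the relay property, where `|P| = n + 1`,
`|B| = t` and `n + 1 > 3t`, let `w` be a word with `|w| = R - 1` and `p` a process.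
Suppose a correct process `j` completes `wp` to the value `v_j`. If either (a) `p`
is validated on a correct process `i` and `v_i = cont i (wp)`, or (b) a correct
process `i` completes `wp` to the value `v_i`, then `v_i = v_j`. -/
theorem stmt10 {P Val : Type*} [Fintype P] [DecidableEq P] [DecidableEq Val]
    (n t R : ℕ) (hR : 1 ≤ R) (hP : Fintype.card P = n + 1)
    (B : Finset P) (hB : B.card = t) (hn : 3 * t < n + 1)
    (cont : P → List P → Val) (hrelay : Relay Bᶜ R cont)
    (w : List P) (hw : w.length + 1 = R) (p : P)
    (i j : P) (hi : i ∈ Bᶜ) (hj : j ∈ Bᶜ)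
    (vi vj : Val)
    (hcj : Completes n t cont Bᶜ j w p vj)
    (hcase : (Validated n t R cont p i ∧ vi = cont i (w ++ [p])) ∨
      Completes n t cont Bᶜ i w p vi) :
    vi = vj := by
  set u := w ++ [p] with hu
  have hulen : u.length = R := by simp [hu]; omega
  set T : Val → Finset P := fun v => Bᶜ.filter (fun q => cont q u = v) with hT
  have hfilter : ∀ k ∈ Bᶜ, ∀ v : Val,
      Bᶜ.filter (fun q => cont k (w ++ [p, q]) = v) = T v := by
    intro k hk v
    apply Finset.filter_congr
    intro q hq
    have h2 : w ++ [p, q] = u ++ [q] := by simp [hu]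
    rw [h2, hrelay q hq k hk u (le_of_eq hulen)]
  have hGcard : Bᶜ.card = n + 1 - t := by
    rw [Finset.card_compl, hB, hP]
  have hTj : n + 1 - 2 * t ≤ (T vj).card := by
    rw [← hfilter j hj vj]; exact hcj
  have hTi : n + 1 - 2 * t ≤ (T vi).card := by
    rcases hcase with ⟨⟨Q, hpQ, hQcard, hQ⟩, hvi⟩ | hci
    · have hsub : Q \ B ⊆ T vi := by
        intro q hq
        rw [Finset.mem_sdiff] at hq
        have hqG : q ∈ Bᶜ := Finset.mem_compl.mpr hq.2
        rw [hT]; simp only [Finset.mem_filter]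
        refine ⟨hqG, ?_⟩
        have h1 : cont i (w ++ [p, q]) = cont i u := hQ q hq.1 w (by omega)
        have h2 : w ++ [p, q] = u ++ [q] := by simp [hu]
        rw [h2, hrelay q hqG i hi u (le_of_eq hulen)] at h1
        rw [h1, hvi]
      have h3 := Finset.le_card_sdiff B Q
      have h4 := Finset.card_le_card hsub
      omega
    · rw [← hfilter i hi vi]; exact hci
  by_contra hne
  have hdisj : Disjoint (T vi) (T vj) := by
    rw [Finset.disjoint_left]
    intro q hqi hqj
    rw [hT] at hqi hqj
    simp only [Finset.mem_filter] at hqi hqj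
    exact hne (hqi.2.symm.trans hqj.2)
  have hsub : T vi ∪ T vj ⊆ Bᶜ :=
    Finset.union_subset (Finset.filter_subset _ _) (Finset.filter_subset _ _)
  have hc := Finset.card_le_card hsub
  rw [Finset.card_union_of_disjoint hdisj] at hc
  omega
end

section
/- In the gossip model with the relay property, where |P| = n+1 and |B| ≤ t: let w be a word over P with 0 ≤ |w| < R, let p ∈ P be validated on a correct process P_i with v = cont_i(wp), let P_j be a correct process, and let C ⊆ P with |C| > 4t. Then strictly more than half of the processes q ∈ C satisfy cont_j(wpq) = v. -/
/-- in the gossip model with the relay property, where `|P| = n + 1`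
and `|B| ≤ t`: let `w` be a word with `0 ≤ |w| < R`, let `p` be validated on a
correct process `i` with `v = cont i (wp)`, let `j` be a correct process, and let
`C ⊆ P` with `|C| > 4t`. Then strictly more than half of the processes `q ∈ C`
satisfy `cont j (wpq) = v`. -/
theorem stmt11 {P Val : Type*} [Fintype P] [DecidableEq P] [DecidableEq Val]
    (n t R : ℕ) (hR : 1 ≤ R) (hP : Fintype.card P = n + 1)
    (B : Finset P) (hB : B.card ≤ t)
    (cont : P → List P → Val) (hrelay : Relay Bᶜ R cont)
    (w : List P) (hw : w.length < R) (p i : P) (hi : i ∈ Bᶜ)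
    (hval : Validated n t R cont p i) (v : Val) (hv : v = cont i (w ++ [p]))
    (j : P) (hj : j ∈ Bᶜ)
    (C : Finset P) (hC : 4 * t < C.card) :
    C.card < 2 * (C.filter (fun q => cont j (w ++ [p, q]) = v)).card := by
  obtain ⟨Q, hpQ, hQcard, hQ⟩ := hval
  -- every correct member of Q satisfies the predicate
  have hsubset : (C ∩ Q) \ B ⊆ C.filter (fun q => cont j (w ++ [p, q]) = v) := by
    intro q hq
    simp only [Finset.mem_sdiff, Finset.mem_inter] at hq
    obtain ⟨⟨hqC, hqQ⟩, hqB⟩ := hq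
    have hqG : q ∈ Bᶜ := Finset.mem_compl.mpr hqB
    have hlen : (w ++ [p]).length ≤ R := by simpa using hw
    have h1 : cont i ((w ++ [p]) ++ [q]) = cont q (w ++ [p]) := hrelay q hqG i hi _ hlen
    have h2 : cont j ((w ++ [p]) ++ [q]) = cont q (w ++ [p]) := hrelay q hqG j hj _ hlen
    have h3 : cont i (w ++ [p, q]) = cont i (w ++ [p]) := hQ q hqQ w hw
    have hre : w ++ [p, q] = (w ++ [p]) ++ [q] := by simp
    refine Finset.mem_filter.mpr ⟨hqC, ?_⟩
    rw [hre, h2, ← h1, ← hre, h3, hv]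
  have hk : ((C ∩ Q) \ B).card ≤ (C.filter (fun q => cont j (w ++ [p, q]) = v)).card :=
    Finset.card_le_card hsubset
  have hsdiff : (C ∩ Q).card ≤ ((C ∩ Q) \ B).card + B.card :=
    Finset.card_le_card_sdiff_add_card
  have hunion : (C ∪ Q).card ≤ n + 1 := hP ▸ Finset.card_le_univ _
  have hCQ : C.card + Q.card = (C ∪ Q).card + (C ∩ Q).card :=
    (Finset.card_union_add_card_inter C Q).symm
  have hQ' : n + 1 ≤ Q.card + t := by omega
  omega
end
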